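/- (Local normal form of the determinantal ideals along the rank stratification.) Let R be a commutative ring, let A be an invertible r×r matrix over R, let Q be an r×q matrix, P a p×r matrix, and N a p×q matrix over R, and let s be a natural number with s ≥ r. Then the ideal of s-minors of the block matrix M = [[A, Q], [P, P·A⁻¹·Q + N]] (of size (r+p)×(r+q)) equals the ideal of (s−r)-minors of N: I_s(M) = I_{s−r}(N). -/

import Mathlib

/-- The ideal of `t`-minors of a matrix `A`, generated by the determinants of
`t × t` submatrices selected by strictly monotone choices of rows and columns. -/
def minorsIdeal {R : Type*} [CommRing R] {m n : ℕ}
    (A : Matrix (Fin m) (Fin n) R) (t : ℕ) : Ideal R :=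
  Ideal.span {x | ∃ (i : Fin t → Fin m) (j : Fin t → Fin n),
    StrictMono i ∧ StrictMono j ∧ x = (A.submatrix i j).det}

open Matrix

section Helpers

variable {R : Type*} [CommRing R]

lemma det_submatrix_mem_minorsIdeal {m n t : ℕ} (A : Matrix (Fin m) (Fin n) R)
    (i : Fin t → Fin m) (j : Fin t → Fin n) (hi : StrictMono i) (hj : StrictMono j) :
    (A.submatrix i j).det ∈ minorsIdeal A t :=
  Ideal.subset_span ⟨i, j, hi, hj, rfl⟩

lemma minorsIdeal_succ_le {m n : ℕ} (A : Matrix (Fin m) (Fin n) R) (t : ℕ) :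
    minorsIdeal A (t + 1) ≤ minorsIdeal A t := by
  rw [minorsIdeal, Ideal.span_le]
  rintro x ⟨i, j, hi, hj, rfl⟩
  rw [Matrix.det_succ_row_zero]
  refine Ideal.sum_mem _ fun c _ => ?_
  rw [Matrix.submatrix_submatrix]
  exact Ideal.mul_mem_left _ _
    (det_submatrix_mem_minorsIdeal A _ _ (hi.comp Fin.strictMono_succ)
      (hj.comp (Fin.strictMono_succAbove c)))

lemma minorsIdeal_antitone {m n : ℕ} (A : Matrix (Fin m) (Fin n) R) :
    Antitone (minorsIdeal A) :=
  antitone_nat_of_succ_le (minorsIdeal_succ_le A)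

lemma det_mul_expand {t n : ℕ} (B : Matrix (Fin t) (Fin n) R) (C : Matrix (Fin n) (Fin t) R) :
    (B * C).det = ∑ p : Fin t → Fin n, (∏ x, B x (p x)) * (C.submatrix p id).det := by
  classical
  have h1 : B * C = Matrix.of fun x => ∑ k, B x k • C k := by
    ext x y
    simp [Matrix.mul_apply, Finset.sum_apply]
  rw [h1]
  calc (Matrix.of fun x => ∑ k, B x k • C k).det
      = ∑ r : Fin t → Fin n,
          Matrix.detRowAlternating (R := R) (n := Fin t) (fun x => B x (r x) • C (r x)) :=
        (Matrix.detRowAlternating (R := R) (n := Fin t)).toMultilinearMap.map_sum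
          (g := fun (x : Fin t) (k : Fin n) => B x k • C k)
    _ = ∑ r : Fin t → Fin n, (∏ x, B x (r x)) * (C.submatrix r id).det := by
        refine Finset.sum_congr rfl fun r _ => ?_
        rw [show (Matrix.detRowAlternating (R := R) (n := Fin t))
              (fun x => B x (r x) • C (r x))
            = (∏ x, B x (r x)) • Matrix.detRowAlternating (R := R) (n := Fin t)
                (fun x => C (r x)) from
          (Matrix.detRowAlternating (R := R) (n := Fin t)).map_smul_univ _ _]
        rw [smul_eq_mul]
        rfl
lemma exists_strictMono_comp {t n : ℕ} {f : Fin t → Fin n} (hf : Function.Injective f) :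
    ∃ (g : Fin t → Fin n) (σ : Equiv.Perm (Fin t)), StrictMono g ∧ f = g ∘ σ := by
  classical
  set s : Finset (Fin n) := Finset.univ.image f with hs
  have hcard : s.card = t := by
    rw [hs, Finset.card_image_of_injective _ hf, Finset.card_univ, Fintype.card_fin]
  set e := s.orderIsoOfFin hcard with he
  have hmem : ∀ x, f x ∈ s := fun x => by simp [hs]
  set σ' : Fin t → Fin t := fun x => e.symm ⟨f x, hmem x⟩ with hσ'
  have hσinj : Function.Injective σ' := by
    intro a b hab
    apply hf
    have := congrArg (fun z => ((e z : s) : Fin n)) hab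
    simpa [hσ'] using this
  refine ⟨fun x => (e x : Fin n), Equiv.ofBijective σ'
    ((Finite.injective_iff_bijective).mp hσinj), fun a b hab => ?_, funext fun x => ?_⟩
  · exact e.strictMono hab
  · simp only [Equiv.ofBijective_apply, hσ', Function.comp_apply]
    simp
lemma det_mul_mem {t n : ℕ} (B : Matrix (Fin t) (Fin n) R) (C : Matrix (Fin n) (Fin t) R)
    {I : Ideal R} (h : ∀ g : Fin t → Fin n, StrictMono g → (C.submatrix g id).det ∈ I) :
    (B * C).det ∈ I := by
  classical
  rw [det_mul_expand]
  refine Ideal.sum_mem _ fun p _ => ?_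
  by_cases hp : Function.Injective p
  · obtain ⟨g, σ, hg, rfl⟩ := exists_strictMono_comp hp
    have hsub : C.submatrix (g ∘ σ) id = (C.submatrix g id).submatrix σ id := rfl
    rw [hsub]
    rw [show (Matrix.det ((C.submatrix g id).submatrix (⇑σ) id))
        = ↑↑(Equiv.Perm.sign σ) * (C.submatrix g id).det from
          Matrix.det_permute σ (C.submatrix g id)]
    exact Ideal.mul_mem_left _ _ (Ideal.mul_mem_left _ _ (h g hg))
  · obtain ⟨a, b, hab, hne⟩ : ∃ a b, p a = p b ∧ a ≠ b := by
      rw [Function.Injective] at hp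
      push_neg at hp
      obtain ⟨a, b, h1, h2⟩ := hp
      exact ⟨a, b, h1, h2⟩
    have hz : (C.submatrix p id).det = 0 :=
      Matrix.det_zero_of_row_eq hne (by funext y; simp [hab])
    rw [hz, mul_zero]
    exact Ideal.zero_mem _
lemma minorsIdeal_transpose {m n : ℕ} (A : Matrix (Fin m) (Fin n) R) (t : ℕ) :
    minorsIdeal Aᵀ t = minorsIdeal A t := by
  unfold minorsIdeal
  congr 1
  ext x
  constructor
  · rintro ⟨i, j, hi, hj, rfl⟩
    exact ⟨j, i, hj, hi, by rw [← Matrix.det_transpose, Matrix.transpose_submatrix, Matrix.transpose_transpose]⟩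
  · rintro ⟨i, j, hi, hj, rfl⟩
    exact ⟨j, i, hj, hi, by
      rw [show Aᵀ.submatrix j i = (A.submatrix i j)ᵀ from (Matrix.transpose_submatrix A i j).symm,
        Matrix.det_transpose]⟩
lemma minorsIdeal_mul_left_le {m n t : ℕ} (U : Matrix (Fin m) (Fin m) R)
    (X : Matrix (Fin m) (Fin n) R) :
    minorsIdeal (U * X) t ≤ minorsIdeal X t := by
  rw [minorsIdeal, Ideal.span_le]
  rintro x ⟨i, j, hi, hj, rfl⟩
  have hfact : (U * X).submatrix i j
      = (U.submatrix i (id : Fin m → Fin m)) * (X.submatrix (id : Fin m → Fin m) j) := by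
    ext a b
    simp [Matrix.mul_apply]
  rw [hfact]
  refine det_mul_mem _ _ fun g hg => ?_
  rw [Matrix.submatrix_submatrix]
  simpa using det_submatrix_mem_minorsIdeal X _ _ hg hj
lemma minorsIdeal_mul_right_le {m n t : ℕ} (X : Matrix (Fin m) (Fin n) R)
    (V : Matrix (Fin n) (Fin n) R) :
    minorsIdeal (X * V) t ≤ minorsIdeal X t := by
  rw [← minorsIdeal_transpose X, ← minorsIdeal_transpose (X * V), Matrix.transpose_mul]
  exact minorsIdeal_mul_left_le _ _
lemma minorsIdeal_unit_mul {m n t : ℕ} {U : Matrix (Fin m) (Fin m) R} (hU : IsUnit U)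
    (X : Matrix (Fin m) (Fin n) R) :
    minorsIdeal (U * X) t = minorsIdeal X t := by
  obtain ⟨u, rfl⟩ := hU
  refine le_antisymm (minorsIdeal_mul_left_le _ _) ?_
  have h2 := minorsIdeal_mul_left_le (t := t) ((↑u⁻¹ : Matrix (Fin m) (Fin m) R))
    ((↑u : Matrix (Fin m) (Fin m) R) * X)
  have h0 : (↑u⁻¹ : Matrix (Fin m) (Fin m) R) * ((↑u : Matrix (Fin m) (Fin m) R) * X) = X := by
    rw [← Matrix.mul_assoc]
    rw [show (↑u⁻¹ : Matrix (Fin m) (Fin m) R) * ↑u = 1 from u.inv_mul, Matrix.one_mul]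
  rwa [h0] at h2
lemma minorsIdeal_mul_unit {m n t : ℕ} (X : Matrix (Fin m) (Fin n) R)
    {V : Matrix (Fin n) (Fin n) R} (hV : IsUnit V) :
    minorsIdeal (X * V) t = minorsIdeal X t := by
  obtain ⟨u, rfl⟩ := hV
  refine le_antisymm (minorsIdeal_mul_right_le _ _) ?_
  have h2 := minorsIdeal_mul_right_le (t := t) (X * (↑u : Matrix (Fin n) (Fin n) R))
    ((↑u⁻¹ : Matrix (Fin n) (Fin n) R))
  have h0 : X * (↑u : Matrix (Fin n) (Fin n) R) * (↑u⁻¹ : Matrix (Fin n) (Fin n) R) = X := by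
    rw [Matrix.mul_assoc]
    rw [show (↑u : Matrix (Fin n) (Fin n) R) * ↑u⁻¹ = 1 from u.mul_inv, Matrix.mul_one]
  rwa [h0] at h2
lemma finSumFinEquiv_symm_left' {m n : ℕ} (v : Fin (m + n)) (h : v.val < m) :
    finSumFinEquiv.symm v = Sum.inl ⟨v.val, h⟩ := by
  rw [Equiv.symm_apply_eq, finSumFinEquiv_apply_left]
  ext
  rfl

lemma finSumFinEquiv_symm_right' {m n : ℕ} (v : Fin (m + n)) (h : m ≤ v.val) :
    finSumFinEquiv.symm v = Sum.inr ⟨v.val - m, by have := v.isLt; omega⟩ := by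
  rw [Equiv.symm_apply_eq, finSumFinEquiv_apply_right]
  ext
  simp [Fin.natAdd]
  omega

lemma mem_iff_lt_card_of_downClosed {n : ℕ} (P : Fin n → Prop) [DecidablePred P]
    (hdc : ∀ a b : Fin n, a ≤ b → P b → P a) (x : Fin n) :
    P x ↔ x.val < (Finset.univ.filter P).card := by
  constructor
  · intro hx
    have hsub : Finset.Iic x ⊆ Finset.univ.filter P := fun y hy =>
      Finset.mem_filter.mpr ⟨Finset.mem_univ _, hdc y x (Finset.mem_Iic.mp hy) hx⟩
    have hc := Finset.card_le_card hsub
    rw [Fin.card_Iic] at hc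
    omega
  · intro hx
    by_contra hP
    have hsub : Finset.univ.filter P ⊆ Finset.Iio x := fun y hy => by
      rcases Finset.mem_filter.mp hy with ⟨-, hPy⟩
      rw [Finset.mem_Iio]
      by_contra hle
      exact hP (hdc x y (le_of_not_gt hle) hPy)
    have hc := Finset.card_le_card hsub
    rw [Fin.card_Iio] at hc
    omega

lemma det_submatrix_blockDiagOne {r p q s k : ℕ} (N : Matrix (Fin p) (Fin q) R)
    (i : Fin s → Fin (r + p)) (j : Fin s → Fin (r + q))
    (hinj_i : Function.Injective i) (hinj_j : Function.Injective j)
    (hks : k ≤ s)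
    (hir : ∀ x : Fin s, x.val < k → (i x).val < r)
    (hjr : ∀ x : Fin s, x.val < k → (j x).val < r)
    (hij : ∀ x : Fin s, x.val < k → (i x).val = (j x).val)
    (i₂ : Fin (s - k) → Fin p) (j₂ : Fin (s - k) → Fin q)
    (hi₂ : ∀ z : Fin (s - k), r + (i₂ z).val = (i ⟨k + z.val, by have := z.isLt; omega⟩).val)
    (hj₂ : ∀ z : Fin (s - k), r + (j₂ z).val = (j ⟨k + z.val, by have := z.isLt; omega⟩).val) :
    ((Matrix.reindex finSumFinEquiv finSumFinEquiv
        (Matrix.fromBlocks (1 : Matrix (Fin r) (Fin r) R) 0 0 N)).submatrix i j).det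
      = (N.submatrix i₂ j₂).det := by
  have hsk : s = k + (s - k) := by omega
  set c : Fin s ≃ Fin k ⊕ Fin (s - k) := (finCongr hsk).trans finSumFinEquiv.symm with hc
  have hcl : ∀ x : Fin s, (hx : x.val < k) → c x = Sum.inl ⟨x.val, hx⟩ := by
    intro x hx
    rw [hc]
    simp only [Equiv.trans_apply, finCongr_apply]
    rw [finSumFinEquiv_symm_left' (Fin.cast hsk x) (by simpa using hx)]
    rfl
  have hcr : ∀ x : Fin s, (hx : ¬ x.val < k) → c x = Sum.inr ⟨x.val - k, by have := x.isLt; omega⟩ := by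
    intro x hx
    rw [hc]
    simp only [Equiv.trans_apply, finCongr_apply]
    rw [finSumFinEquiv_symm_right' (Fin.cast hsk x) (by simpa using Nat.le_of_not_lt hx)]
    rfl
  -- values of i on the upper range
  have hxi : ∀ (x : Fin s) (_ : ¬ x.val < k),
      (i x).val = r + (i₂ ⟨x.val - k, by have := x.isLt; omega⟩).val := by
    intro x hx
    rw [hi₂ ⟨x.val - k, by have := x.isLt; omega⟩]
    have hz : (⟨k + ((⟨x.val - k, by have := x.isLt; omega⟩ : Fin (s - k))).val,
        by have := x.isLt; omega⟩ : Fin s) = x := by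
      ext
      simp only
      omega
    rw [hz]
  have hxj : ∀ (x : Fin s) (_ : ¬ x.val < k),
      (j x).val = r + (j₂ ⟨x.val - k, by have := x.isLt; omega⟩).val := by
    intro x hx
    rw [hj₂ ⟨x.val - k, by have := x.isLt; omega⟩]
    have hz : (⟨k + ((⟨x.val - k, by have := x.isLt; omega⟩ : Fin (s - k))).val,
        by have := x.isLt; omega⟩ : Fin s) = x := by
      ext
      simp only
      omega
    rw [hz]
  have hmat : (Matrix.reindex finSumFinEquiv finSumFinEquiv
        (Matrix.fromBlocks (1 : Matrix (Fin r) (Fin r) R) 0 0 N)).submatrix i j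
      = (Matrix.fromBlocks (1 : Matrix (Fin k) (Fin k) R) 0 0 (N.submatrix i₂ j₂)).submatrix c c := by
    ext x y
    rw [Matrix.submatrix_apply, Matrix.submatrix_apply, Matrix.reindex_apply,
      Matrix.submatrix_apply]
    by_cases hx : x.val < k <;> by_cases hy : y.val < k
    · rw [hcl x hx, hcl y hy,
        finSumFinEquiv_symm_left' (i x) (hir x hx),
        finSumFinEquiv_symm_left' (j y) (hjr y hy)]
      simp only [Matrix.fromBlocks_apply₁₁, Matrix.one_apply, Fin.mk.injEq]
      have hiff : ((i x).val = (j y).val) ↔ (x.val = y.val) := by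
        constructor
        · intro hv
          have : (i x).val = (i y).val := by rw [hv, hij y hy]
          have := hinj_i (Fin.ext this)
          rw [this]
        · intro hv
          have : x = y := Fin.ext hv
          rw [this, hij y hy]
      exact if_congr hiff rfl rfl
    · rw [hcl x hx, hcr y hy,
        finSumFinEquiv_symm_left' (i x) (hir x hx),
        finSumFinEquiv_symm_right' (j y) (by rw [hxj y hy]; omega)]
      simp
    · rw [hcr x hx, hcl y hy,
        finSumFinEquiv_symm_right' (i x) (by rw [hxi x hx]; omega),
        finSumFinEquiv_symm_left' (j y) (hjr y hy)]
      simp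
    · rw [hcr x hx, hcr y hy,
        finSumFinEquiv_symm_right' (i x) (by rw [hxi x hx]; omega),
        finSumFinEquiv_symm_right' (j y) (by rw [hxj y hy]; omega)]
      simp only [Matrix.fromBlocks_apply₂₂, Matrix.submatrix_apply]
      congr 1
      · ext
        simp only
        rw [hxi x hx]
        omega
      · ext
        simp only
        rw [hxj y hy]
        omega
  rw [hmat, Matrix.det_submatrix_equiv_self c, Matrix.det_fromBlocks_zero₂₁,
    Matrix.det_one, one_mul]
lemma strictMono_matching_le {s a b r : ℕ} {f : Fin s → Fin a} {g : Fin s → Fin b}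
    (hf : StrictMono f) (hg : StrictMono g)
    (hex : ∀ x : Fin s, (f x).val < r → ∃ y, (g y).val = (f x).val) :
    ∀ x : Fin s, (f x).val < r → (g x).val ≤ (f x).val := by
  classical
  choose μ hμ using hex
  have lemu : ∀ (m : ℕ) (x : Fin s) (h : (f x).val < r), x.val = m → x.val ≤ (μ x h).val := by
    intro m
    induction m with
    | zero => intro x h hx; omega
    | succ m ih =>
      intro x h hx
      have hms : m < s := by have := x.isLt; omega
      have hlt : (⟨m, hms⟩ : Fin s) < x := by rw [Fin.lt_def]; simp; omega
      have hfv : (f ⟨m, hms⟩).val < (f x).val := by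
        have := hf hlt
        rw [Fin.lt_def] at this
        exact this
      have hfx' : (f ⟨m, hms⟩).val < r := by omega
      have h1 := ih ⟨m, hms⟩ hfx' rfl
      have h2 : μ ⟨m, hms⟩ hfx' < μ x h := by
        refine (hg.lt_iff_lt).mp ?_
        rw [Fin.lt_def, hμ, hμ]
        exact hfv
      rw [Fin.lt_def] at h2
      simp only at h1
      omega
  intro x h
  have h1 := lemu x.val x h rfl
  have h2 : g x ≤ g (μ x h) := hg.monotone (by rw [Fin.le_def]; omega)
  rw [Fin.le_def] at h2
  have h3 := hμ x h
  omega

lemma minorsIdeal_one_fromBlocks {r p q : ℕ} (N : Matrix (Fin p) (Fin q) R) (s : ℕ)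
    (hs : r ≤ s) :
    minorsIdeal (Matrix.reindex finSumFinEquiv finSumFinEquiv
      (Matrix.fromBlocks (1 : Matrix (Fin r) (Fin r) R) 0 0 N)) s = minorsIdeal N (s - r) := by
  classical
  apply le_antisymm
  · rw [minorsIdeal, Ideal.span_le]
    rintro d ⟨i, j, hi, hj, rfl⟩
    simp only [SetLike.mem_coe]
    by_cases ha : ∃ x : Fin s, (i x).val < r ∧ ∀ y : Fin s, (j y).val ≠ (i x).val
    · obtain ⟨x, hxr, hx⟩ := ha
      rw [Matrix.det_eq_zero_of_row_eq_zero x ?_]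
      · exact Ideal.zero_mem _
      · intro y
        rw [Matrix.submatrix_apply, Matrix.reindex_apply, Matrix.submatrix_apply,
          finSumFinEquiv_symm_left' (i x) hxr]
        by_cases hy : (j y).val < r
        · rw [finSumFinEquiv_symm_left' (j y) hy]
          simp only [Matrix.fromBlocks_apply₁₁]
          exact Matrix.one_apply_ne (fun hcon => hx y (congrArg Fin.val hcon).symm)
        · rw [finSumFinEquiv_symm_right' (j y) (Nat.le_of_not_lt hy)]
          simp
    · by_cases hb : ∃ y : Fin s, (j y).val < r ∧ ∀ x : Fin s, (i x).val ≠ (j y).val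
      · obtain ⟨y, hyr, hy⟩ := hb
        rw [Matrix.det_eq_zero_of_column_eq_zero y ?_]
        · exact Ideal.zero_mem _
        · intro x
          rw [Matrix.submatrix_apply, Matrix.reindex_apply, Matrix.submatrix_apply,
            finSumFinEquiv_symm_left' (j y) hyr]
          by_cases hxx : (i x).val < r
          · rw [finSumFinEquiv_symm_left' (i x) hxx]
            simp only [Matrix.fromBlocks_apply₁₁]
            exact Matrix.one_apply_ne (fun hcon => hy x (congrArg Fin.val hcon))
          · rw [finSumFinEquiv_symm_right' (i x) (Nat.le_of_not_lt hxx)]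
            simp
      · push_neg at ha hb
        have keyA := strictMono_matching_le hi hj ha
        have keyB := strictMono_matching_le hj hi hb
        have hiffP : ∀ x : Fin s, (i x).val < r ↔ (j x).val < r := fun x =>
          ⟨fun h => lt_of_le_of_lt (keyA x h) h, fun h => lt_of_le_of_lt (keyB x h) h⟩
        have heq : ∀ x : Fin s, (i x).val < r → (i x).val = (j x).val := fun x h =>
          le_antisymm (keyB x ((hiffP x).mp h)) (keyA x h)
        set k : ℕ := (Finset.univ.filter fun x : Fin s => (i x).val < r).card with hkdef
        have hk : ∀ x : Fin s, (i x).val < r ↔ x.val < k := fun x =>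
          mem_iff_lt_card_of_downClosed (fun y : Fin s => (i y).val < r)
            (fun a b hab hPb => lt_of_le_of_lt
              (by have := hi.monotone hab; rw [Fin.le_def] at this; exact this) hPb) x
        have hkj : ∀ x : Fin s, (j x).val < r ↔ x.val < k := fun x =>
          ((hiffP x).symm).trans (hk x)
        have hks : k ≤ s := by
          rw [hkdef]
          have := Finset.card_filter_le (Finset.univ : Finset (Fin s))
            (fun x : Fin s => (i x).val < r)
          simpa using this
        have hkr : k ≤ r := by
          rw [hkdef]
          have := Finset.card_le_card_of_injOn
            (s := Finset.univ.filter fun x : Fin s => (i x).val < r)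
            (t := Finset.range r) (fun x : Fin s => (i x).val)
            (fun x hxm => by
              rw [Finset.mem_coe, Finset.mem_filter] at hxm
              exact Finset.mem_range.mpr hxm.2)
            (fun x _ y _ hxy => hi.injective (Fin.ext hxy))
          rw [Finset.card_range] at this
          exact this
        have hup : ∀ x : Fin s, k ≤ x.val → r ≤ (i x).val := fun x hx =>
          Nat.le_of_not_lt fun hcon => by have := (hk x).mp hcon; omega
        have hupj : ∀ x : Fin s, k ≤ x.val → r ≤ (j x).val := fun x hx =>
          Nat.le_of_not_lt fun hcon => by have := (hkj x).mp hcon; omega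
        set X : Fin (s - k) → Fin s := fun z => ⟨k + z.val, by have := z.isLt; omega⟩ with hX
        have hXmono : StrictMono X := by
          intro a b hab
          rw [Fin.lt_def] at hab ⊢
          simp only [hX]
          omega
        set i₂ : Fin (s - k) → Fin p := fun z => ⟨(i (X z)).val - r, by
          have h1 := hup (X z) (by simp [hX])
          have h2 := (i (X z)).isLt
          omega⟩ with hi₂def
        set j₂ : Fin (s - k) → Fin q := fun z => ⟨(j (X z)).val - r, by
          have h1 := hupj (X z) (by simp [hX])
          have h2 := (j (X z)).isLt
          omega⟩ with hj₂def
        have hi₂mono : StrictMono i₂ := by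
          intro a b hab
          have h3 := hi (hXmono hab)
          have h4 := hup (X a) (by simp [hX])
          rw [Fin.lt_def] at h3 ⊢
          simp only [hi₂def]
          omega
        have hj₂mono : StrictMono j₂ := by
          intro a b hab
          have h3 := hj (hXmono hab)
          have h4 := hupj (X a) (by simp [hX])
          rw [Fin.lt_def] at h3 ⊢
          simp only [hj₂def]
          omega
        have hdet := det_submatrix_blockDiagOne N i j hi.injective hj.injective hks
          (fun x hx => (hk x).mpr hx) (fun x hx => (hkj x).mpr hx)
          (fun x hx => heq x ((hk x).mpr hx)) i₂ j₂
          (fun z => by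
            have h1 := hup (X z) (by simp [hX])
            show r + ((i (X z)).val - r) = (i (X z)).val
            omega)
          (fun z => by
            have h1 := hupj (X z) (by simp [hX])
            show r + ((j (X z)).val - r) = (j (X z)).val
            omega)
        rw [hdet]
        exact minorsIdeal_antitone N (show s - r ≤ s - k by omega)
          (det_submatrix_mem_minorsIdeal N i₂ j₂ hi₂mono hj₂mono)
  · refine Ideal.span_le.mpr ?_
    rintro d ⟨i, j, hi, hj, rfl⟩
    simp only [SetLike.mem_coe]
    set i' : Fin s → Fin (r + p) := fun x =>
      if h : x.val < r then ⟨x.val, by omega⟩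
      else Fin.natAdd r (i ⟨x.val - r, by have := x.isLt; omega⟩) with hi'def
    set j' : Fin s → Fin (r + q) := fun x =>
      if h : x.val < r then ⟨x.val, by omega⟩
      else Fin.natAdd r (j ⟨x.val - r, by have := x.isLt; omega⟩) with hj'def
    have hval_i' : ∀ (x : Fin s) (h : ¬ x.val < r),
        (i' x).val = r + (i ⟨x.val - r, by have := x.isLt; omega⟩).val := by
      intro x h
      simp only [hi'def, dif_neg h, Fin.natAdd]
    have hval_j' : ∀ (x : Fin s) (h : ¬ x.val < r),
        (j' x).val = r + (j ⟨x.val - r, by have := x.isLt; omega⟩).val := by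
      intro x h
      simp only [hj'def, dif_neg h, Fin.natAdd]
    have hval_i'l : ∀ (x : Fin s) (h : x.val < r), (i' x).val = x.val := by
      intro x h
      simp only [hi'def, dif_pos h]
    have hval_j'l : ∀ (x : Fin s) (h : x.val < r), (j' x).val = x.val := by
      intro x h
      simp only [hj'def, dif_pos h]
    have hi'mono : StrictMono i' := by
      intro a b hab
      rw [Fin.lt_def] at hab ⊢
      by_cases ha : a.val < r <;> by_cases hb : b.val < r
      · rw [hval_i'l a ha, hval_i'l b hb]; exact hab
      · rw [hval_i'l a ha, hval_i' b hb]; omega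
      · omega
      · rw [hval_i' a ha, hval_i' b hb]
        have := hi (show (⟨a.val - r, by have := a.isLt; omega⟩ : Fin (s - r))
            < ⟨b.val - r, by have := b.isLt; omega⟩ by rw [Fin.lt_def]; simp; omega)
        rw [Fin.lt_def] at this
        omega
    have hj'mono : StrictMono j' := by
      intro a b hab
      rw [Fin.lt_def] at hab ⊢
      by_cases ha : a.val < r <;> by_cases hb : b.val < r
      · rw [hval_j'l a ha, hval_j'l b hb]; exact hab
      · rw [hval_j'l a ha, hval_j' b hb]; omega
      · omega
      · rw [hval_j' a ha, hval_j' b hb]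
        have := hj (show (⟨a.val - r, by have := a.isLt; omega⟩ : Fin (s - r))
            < ⟨b.val - r, by have := b.isLt; omega⟩ by rw [Fin.lt_def]; simp; omega)
        rw [Fin.lt_def] at this
        omega
    have hdet := det_submatrix_blockDiagOne N i' j' hi'mono.injective hj'mono.injective hs
      (fun x hx => by rw [hval_i'l x hx]; exact hx)
      (fun x hx => by rw [hval_j'l x hx]; exact hx)
      (fun x hx => by rw [hval_i'l x hx, hval_j'l x hx]) i j
      (fun z => by
        have h : ¬ ((⟨r + z.val, by have := z.isLt; omega⟩ : Fin s).val < r) := by simp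
        rw [hval_i' _ h]
        congr 2
        ext
        simp)
      (fun z => by
        have h : ¬ ((⟨r + z.val, by have := z.isLt; omega⟩ : Fin s).val < r) := by simp
        rw [hval_j' _ h]
        congr 2
        ext
        simp)
    exact Ideal.subset_span ⟨i', j', hi'mono, hj'mono, hdet.symm⟩

end Helpers


/-- Local normal form of the determinantal ideals along the rank stratification:
for an invertible `r × r` block `A`, the ideal of `s`-minors (`s ≥ r`) of the
block matrix `[[A, Q], [P, P·A⁻¹·Q + N]]` equals the ideal of `(s-r)`-minors
of `N`. -/
theorem minorsIdeal_blocks_eq {R : Type*} [CommRing R] {r p q : ℕ}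
    (A : Matrix (Fin r) (Fin r) R) (hA : IsUnit A)
    (Q : Matrix (Fin r) (Fin q) R) (P : Matrix (Fin p) (Fin r) R)
    (N : Matrix (Fin p) (Fin q) R) (s : ℕ) (hs : r ≤ s) :
    minorsIdeal
      (Matrix.reindex finSumFinEquiv finSumFinEquiv
        (Matrix.fromBlocks A Q P (P * A⁻¹ * Q + N))) s
      = minorsIdeal N (s - r) := by
  classical
  have hdet : IsUnit A.det := (Matrix.isUnit_iff_isUnit_det A).mp hA
  have hAiA : A⁻¹ * A = 1 := Matrix.nonsing_inv_mul A hdet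
  have hAAi : A * A⁻¹ = 1 := Matrix.mul_nonsing_inv A hdet
  have h3 : (Matrix.fromBlocks (1 : Matrix (Fin r) (Fin r) R) 0 0 N) *
      (Matrix.fromBlocks (1 : Matrix (Fin r) (Fin r) R) (A⁻¹ * Q) 0 (1 : Matrix (Fin q) (Fin q) R)) = Matrix.fromBlocks (1 : Matrix (Fin r) (Fin r) R) (A⁻¹ * Q) 0 N := by
    simp [Matrix.fromBlocks_multiply]
  have h2 : (Matrix.fromBlocks A 0 0 (1 : Matrix (Fin p) (Fin p) R)) *
      Matrix.fromBlocks (1 : Matrix (Fin r) (Fin r) R) (A⁻¹ * Q) 0 N = Matrix.fromBlocks A Q 0 N := by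
    simp [Matrix.fromBlocks_multiply, ← Matrix.mul_assoc, hAAi]
  have h1 : (Matrix.fromBlocks (1 : Matrix (Fin r) (Fin r) R) 0 (P * A⁻¹) (1 : Matrix (Fin p) (Fin p) R)) *
      Matrix.fromBlocks A Q 0 N = Matrix.fromBlocks A Q P (P * A⁻¹ * Q + N) := by
    simp [Matrix.fromBlocks_multiply, Matrix.mul_assoc, hAiA]
  have hfact : Matrix.fromBlocks A Q P (P * A⁻¹ * Q + N) =
      (Matrix.fromBlocks (1 : Matrix (Fin r) (Fin r) R) 0 (P * A⁻¹)
        (1 : Matrix (Fin p) (Fin p) R)) *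
      ((Matrix.fromBlocks A 0 0 (1 : Matrix (Fin p) (Fin p) R)) *
        ((Matrix.fromBlocks (1 : Matrix (Fin r) (Fin r) R) 0 0 N) *
          (Matrix.fromBlocks (1 : Matrix (Fin r) (Fin r) R) (A⁻¹ * Q) 0
            (1 : Matrix (Fin q) (Fin q) R)))) := by
    rw [h3, h2, h1]
  have hU₁ : IsUnit (Matrix.fromBlocks (1 : Matrix (Fin r) (Fin r) R) 0 (P * A⁻¹)
      (1 : Matrix (Fin p) (Fin p) R)) := by
    have e1 : Matrix.fromBlocks (1 : Matrix (Fin r) (Fin r) R) 0 (P * A⁻¹)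
        (1 : Matrix (Fin p) (Fin p) R) * Matrix.fromBlocks 1 0 (-(P * A⁻¹)) 1 = 1 := by
      simp [Matrix.fromBlocks_multiply, Matrix.fromBlocks_one]
    have e2 : Matrix.fromBlocks (1 : Matrix (Fin r) (Fin r) R) 0 (-(P * A⁻¹)) 1 *
        Matrix.fromBlocks (1 : Matrix (Fin r) (Fin r) R) 0 (P * A⁻¹)
        (1 : Matrix (Fin p) (Fin p) R) = 1 := by
      simp [Matrix.fromBlocks_multiply, Matrix.fromBlocks_one]
    exact ⟨⟨_, _, e1, e2⟩, rfl⟩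
  have hU₂ : IsUnit (Matrix.fromBlocks A 0 0 (1 : Matrix (Fin p) (Fin p) R)) := by
    have e1 : Matrix.fromBlocks A 0 0 (1 : Matrix (Fin p) (Fin p) R) *
        Matrix.fromBlocks A⁻¹ 0 0 1 = 1 := by
      simp [Matrix.fromBlocks_multiply, hAAi, hAiA, Matrix.fromBlocks_one]
    have e2 : Matrix.fromBlocks A⁻¹ 0 0 (1 : Matrix (Fin p) (Fin p) R) *
        Matrix.fromBlocks A 0 0 1 = 1 := by
      simp [Matrix.fromBlocks_multiply, hAAi, hAiA, Matrix.fromBlocks_one]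
    exact ⟨⟨_, _, e1, e2⟩, rfl⟩
  have hU₃ : IsUnit (Matrix.fromBlocks (1 : Matrix (Fin r) (Fin r) R) (A⁻¹ * Q) 0
      (1 : Matrix (Fin q) (Fin q) R)) := by
    have e1 : Matrix.fromBlocks (1 : Matrix (Fin r) (Fin r) R) (A⁻¹ * Q) 0
        (1 : Matrix (Fin q) (Fin q) R) *
        Matrix.fromBlocks (1 : Matrix (Fin r) (Fin r) R) (-(A⁻¹ * Q)) 0
          (1 : Matrix (Fin q) (Fin q) R) = 1 := by
      simp [Matrix.fromBlocks_multiply, Matrix.fromBlocks_one]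
    have e2 : Matrix.fromBlocks (1 : Matrix (Fin r) (Fin r) R) (-(A⁻¹ * Q)) 0
        (1 : Matrix (Fin q) (Fin q) R) *
        Matrix.fromBlocks (1 : Matrix (Fin r) (Fin r) R) (A⁻¹ * Q) 0
        (1 : Matrix (Fin q) (Fin q) R) = 1 := by
      simp [Matrix.fromBlocks_multiply, Matrix.fromBlocks_one]
    exact ⟨⟨_, _, e1, e2⟩, rfl⟩
  have hU₁' : IsUnit (Matrix.reindex finSumFinEquiv finSumFinEquiv
      (Matrix.fromBlocks (1 : Matrix (Fin r) (Fin r) R) 0 (P * A⁻¹) (1 : Matrix (Fin p) (Fin p) R))) := by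
    have := hU₁.map (Matrix.reindexAlgEquiv R R (finSumFinEquiv (m := r) (n := p)))
    simpa using this
  have hU₂' : IsUnit (Matrix.reindex finSumFinEquiv finSumFinEquiv
      (Matrix.fromBlocks A 0 0 (1 : Matrix (Fin p) (Fin p) R))) := by
    have := hU₂.map (Matrix.reindexAlgEquiv R R (finSumFinEquiv (m := r) (n := p)))
    simpa using this
  have hU₃' : IsUnit (Matrix.reindex finSumFinEquiv finSumFinEquiv
      (Matrix.fromBlocks (1 : Matrix (Fin r) (Fin r) R) (A⁻¹ * Q) 0 (1 : Matrix (Fin q) (Fin q) R))) := by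
    have := hU₃.map (Matrix.reindexAlgEquiv R R (finSumFinEquiv (m := r) (n := q)))
    simpa using this
  have hsplit1 : Matrix.reindex finSumFinEquiv finSumFinEquiv
      ((Matrix.fromBlocks (1 : Matrix (Fin r) (Fin r) R) 0 (P * A⁻¹)
          (1 : Matrix (Fin p) (Fin p) R)) *
        ((Matrix.fromBlocks A 0 0 (1 : Matrix (Fin p) (Fin p) R)) *
          ((Matrix.fromBlocks (1 : Matrix (Fin r) (Fin r) R) 0 0 N) *
            (Matrix.fromBlocks (1 : Matrix (Fin r) (Fin r) R) (A⁻¹ * Q) 0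
              (1 : Matrix (Fin q) (Fin q) R)))))
      = Matrix.reindex finSumFinEquiv finSumFinEquiv
          (Matrix.fromBlocks (1 : Matrix (Fin r) (Fin r) R) 0 (P * A⁻¹) (1 : Matrix (Fin p) (Fin p) R)) *
        Matrix.reindex finSumFinEquiv finSumFinEquiv
          ((Matrix.fromBlocks A 0 0 (1 : Matrix (Fin p) (Fin p) R)) *
            ((Matrix.fromBlocks (1 : Matrix (Fin r) (Fin r) R) 0 0 N) *
              (Matrix.fromBlocks (1 : Matrix (Fin r) (Fin r) R) (A⁻¹ * Q) 0
                (1 : Matrix (Fin q) (Fin q) R)))) := by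
    simp only [Matrix.reindex_apply]
    exact (Matrix.submatrix_mul_equiv _ _ finSumFinEquiv.symm finSumFinEquiv.symm
      finSumFinEquiv.symm).symm
  have hsplit2 : Matrix.reindex finSumFinEquiv finSumFinEquiv
      ((Matrix.fromBlocks A 0 0 (1 : Matrix (Fin p) (Fin p) R)) *
        ((Matrix.fromBlocks (1 : Matrix (Fin r) (Fin r) R) 0 0 N) *
          (Matrix.fromBlocks (1 : Matrix (Fin r) (Fin r) R) (A⁻¹ * Q) 0
            (1 : Matrix (Fin q) (Fin q) R))))
      = Matrix.reindex finSumFinEquiv finSumFinEquiv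
          (Matrix.fromBlocks A 0 0 (1 : Matrix (Fin p) (Fin p) R)) *
        Matrix.reindex finSumFinEquiv finSumFinEquiv
          ((Matrix.fromBlocks (1 : Matrix (Fin r) (Fin r) R) 0 0 N) *
            (Matrix.fromBlocks (1 : Matrix (Fin r) (Fin r) R) (A⁻¹ * Q) 0
              (1 : Matrix (Fin q) (Fin q) R))) := by
    simp only [Matrix.reindex_apply]
    exact (Matrix.submatrix_mul_equiv _ _ finSumFinEquiv.symm finSumFinEquiv.symm
      finSumFinEquiv.symm).symm
  have hsplit3 : Matrix.reindex finSumFinEquiv finSumFinEquiv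
      ((Matrix.fromBlocks (1 : Matrix (Fin r) (Fin r) R) 0 0 N) *
        (Matrix.fromBlocks (1 : Matrix (Fin r) (Fin r) R) (A⁻¹ * Q) 0
          (1 : Matrix (Fin q) (Fin q) R)))
      = Matrix.reindex finSumFinEquiv finSumFinEquiv
          (Matrix.fromBlocks (1 : Matrix (Fin r) (Fin r) R) 0 0 N) *
        Matrix.reindex finSumFinEquiv finSumFinEquiv
          (Matrix.fromBlocks (1 : Matrix (Fin r) (Fin r) R) (A⁻¹ * Q) 0 (1 : Matrix (Fin q) (Fin q) R)) := by
    simp only [Matrix.reindex_apply]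
    exact (Matrix.submatrix_mul_equiv _ _ finSumFinEquiv.symm finSumFinEquiv.symm
      finSumFinEquiv.symm).symm
  rw [hfact, hsplit1, minorsIdeal_unit_mul hU₁' _, hsplit2, minorsIdeal_unit_mul hU₂' _,
    hsplit3, minorsIdeal_mul_unit _ hU₃']
  exact minorsIdeal_one_fromBlocks N s hs
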